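/- The Flammia POVM is rank-1 strictly-complete: Let d ≥ 2, a, b > 0, let ψ ∈ ℂ^d with ψ_0 ≠ 0, and set ρ = ψψ†. If σ is any PSD d×d matrix with Tr(σ) = Tr(ρ) and Tr(E σ) = Tr(E ρ) for every E among E_0 = a·e_0e_0†, E_k = b(𝟙 + e_0e_k† + e_ke_0†), and Ẽ_k = b(𝟙 − i·e_0e_k† + i·e_ke_0†) for k = 1, …, d−1, then σ = ρ. -/

import Mathlib

open Matrix
open scoped ComplexOrder

/-- The rank-one (outer-product) matrix `ψψ†`, with entries `ψ_j · conj(ψ_k)`. -/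
noncomputable def outerProd {n : Type*} (ψ : n → ℂ) : Matrix n n ℂ :=
  Matrix.of fun j k => ψ j * star (ψ k)

/-!
Besides the trace, the measurements see only the first column of `σ`: `E₀` fixes `σ₀₀`, and once
the trace is known `E_k` and `Ẽ_k` fix `σ_k0 + σ_0k` and `i(σ_0k − σ_k0)`, hence `σ_k0`.
A positive semidefinite matrix whose first column is that of `ψψ†` with `ψ₀ ≠ 0` dominates
`ψψ†` (a rank-one Schur complement), and a positive semidefinite matrix of trace zero vanishes.
-/

lemma Matrix.apply_eq_of_flammia_traces_eq {n : Type*} [Fintype n] [DecidableEq n]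
    {M N : Matrix n n ℂ} {b : ℂ} (hb : b ≠ 0) {i j : n} (htr : M.trace = N.trace)
    (hE : ((b • (1 + single i j 1 + single j i 1)) * M).trace
      = ((b • (1 + single i j 1 + single j i 1)) * N).trace)
    (hEt : ((b • (1 - Complex.I • single i j 1 + Complex.I • single j i 1)) * M).trace
      = ((b • (1 - Complex.I • single i j 1 + Complex.I • single j i 1)) * N).trace) :
    M j i = N j i := by
  simp only [smul_mul_assoc, add_mul, sub_mul, one_mul, trace_add, trace_sub, trace_smul,
    trace_single_mul, htr, smul_eq_mul] at hE hEt
  have hsum := mul_left_cancel₀ hb hE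
  have hdiff := mul_left_cancel₀ hb hEt
  linear_combination (1 / 2 : ℂ) * hsum + (Complex.I / 2) * hdiff
    + (1 / 2) * (M j i - M i j - N j i + N i j) * Complex.I_sq

lemma outerProd_mulVec {n : Type*} [Fintype n] (ψ x : n → ℂ) :
    outerProd ψ *ᵥ x = (star ψ ⬝ᵥ x) • ψ :=
  (vecMulVec_mulVec ψ (star ψ) x).trans (op_smul_eq_smul _ ψ)

lemma Matrix.PosSemidef.sub_outerProd_of_col_eq {n : Type*} [Fintype n] [DecidableEq n]
    {σ : Matrix n n ℂ} (hσ : σ.PosSemidef) {ψ : n → ℂ} {i : n} (hψ : ψ i ≠ 0)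
    (hcol : ∀ j, σ j i = outerProd ψ j i) : (σ - outerProd ψ).PosSemidef := by
  have hherm : (outerProd ψ).IsHermitian := (posSemidef_vecMulVec_self_star ψ).isHermitian
  refine posSemidef_iff_dotProduct_mulVec.mpr ⟨hσ.isHermitian.sub hherm, fun x => ?_⟩
  set α := star ψ ⬝ᵥ x
  have hσe : σ *ᵥ Pi.single i 1 = star (ψ i) • ψ := by
    ext j
    simp [mulVec_single, hcol, outerProd, mul_comm]
  have hσx : (σ *ᵥ x) i = ψ i * α := by
    simp only [mulVec, dotProduct, α, Finset.mul_sum, ← hσ.isHermitian.apply i, hcol, outerProd,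
      of_apply, star_mul', star_star, Pi.star_apply, mul_assoc, mul_left_comm]
  -- Moving `x` along `e_i` to kill its `ψ`-component turns `x†σx` into `x†(σ - ψψ†)x`.
  set y := x - (α / star (ψ i)) • Pi.single i 1
  have key : star y ⬝ᵥ σ *ᵥ y = star x ⬝ᵥ (σ - outerProd ψ) *ᵥ x := by
    have hψi : star (ψ i) ≠ 0 := star_ne_zero.mpr hψ
    have hxψ : star x ⬝ᵥ ψ = star α := star_dotProduct x ψ
    simp only [y, mulVec_sub, mulVec_smul, hσe, star_sub, star_smul, sub_dotProduct,
      dotProduct_sub, smul_dotProduct, dotProduct_smul, outerProd_mulVec, sub_mulVec,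
      Pi.star_single, star_one, single_dotProduct, one_mul, hσx, hxψ, smul_eq_mul, star_div₀,
      star_star]
    field_simp
    ring
  rw [← key]
  exact hσ.dotProduct_mulVec_nonneg y

/-- **The Flammia POVM is rank-1 strictly-complete.** If a PSD matrix `σ` has the same trace as
`ρ = ψψ†` (with `ψ₀ ≠ 0`) and the same traces against `E₀ = a·e₀e₀†`,
`E_k = b(𝟙 + e₀e_k† + e_ke₀†)` and `Ẽ_k = b(𝟙 − i e₀e_k† + i e_ke₀†)` (k = 1,…,d−1),
then `σ = ρ`. -/
theorem flammia_rank1_strictly_complete (d : ℕ) (hd : 2 ≤ d) (a b : ℝ)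
    (ha : 0 < a) (hb : 0 < b)
    (ψ : Fin d → ℂ) (hψ0 : ψ ⟨0, by omega⟩ ≠ 0)
    (σ : Matrix (Fin d) (Fin d) ℂ) (hσ : σ.PosSemidef)
    (htr : σ.trace = (outerProd ψ).trace)
    (h0 : (((a : ℂ) • Matrix.single (⟨0, by omega⟩ : Fin d) (⟨0, by omega⟩ : Fin d) 1)
            * σ).trace
        = (((a : ℂ) • Matrix.single (⟨0, by omega⟩ : Fin d) (⟨0, by omega⟩ : Fin d) 1)
            * outerProd ψ).trace)
    (hE : ∀ k : Fin d, k ≠ ⟨0, by omega⟩ →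
      (((b : ℂ) • ((1 : Matrix (Fin d) (Fin d) ℂ)
          + Matrix.single (⟨0, by omega⟩ : Fin d) k 1
          + Matrix.single k (⟨0, by omega⟩ : Fin d) 1)) * σ).trace
        = (((b : ℂ) • ((1 : Matrix (Fin d) (Fin d) ℂ)
          + Matrix.single (⟨0, by omega⟩ : Fin d) k 1
          + Matrix.single k (⟨0, by omega⟩ : Fin d) 1)) * outerProd ψ).trace)
    (hEt : ∀ k : Fin d, k ≠ ⟨0, by omega⟩ →
      (((b : ℂ) • ((1 : Matrix (Fin d) (Fin d) ℂ)
          - Complex.I • Matrix.single (⟨0, by omega⟩ : Fin d) k 1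
          + Complex.I • Matrix.single k (⟨0, by omega⟩ : Fin d) 1)) * σ).trace
        = (((b : ℂ) • ((1 : Matrix (Fin d) (Fin d) ℂ)
          - Complex.I • Matrix.single (⟨0, by omega⟩ : Fin d) k 1
          + Complex.I • Matrix.single k (⟨0, by omega⟩ : Fin d) 1)) * outerProd ψ).trace) :
    σ = outerProd ψ := by
  set z : Fin d := ⟨0, by omega⟩
  have hdiag : σ z z = outerProd ψ z z := by
    simp only [smul_mul_assoc, trace_smul, trace_single_mul, one_smul] at h0
    exact smul_right_injective ℂ (by exact_mod_cast ha.ne' : (a : ℂ) ≠ 0) h0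
  have hcol : ∀ k, σ k z = outerProd ψ k z := by
    intro k
    by_cases hk : k = z
    · rw [hk, hdiag]
    · exact Matrix.apply_eq_of_flammia_traces_eq (by exact_mod_cast hb.ne') htr (hE k hk)
        (hEt k hk)
  have hdiff_psd := hσ.sub_outerProd_of_col_eq hψ0 hcol
  have hdiff_trace : (σ - outerProd ψ).trace = 0 := by rw [trace_sub, htr, sub_self]
  exact sub_eq_zero.mp (hdiff_psd.trace_eq_zero_iff.mp hdiff_trace)
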